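/- Let 𝔐 be a class of preference models and ★ a dynamic operator closed over 𝔐. The schema [★φ][≤](φ → ξ) → (¬φ → [≤][★φ](φ → ξ)) is valid in ⟨𝔐, ★⟩ for all φ ∈ L_0 and ξ ∈ L_≤(★) if and only if ★ is 𝔐-DP4-compliant. -/

import Mathlib

/-!
Since `φ` is propositional, its truth is unaffected by `★`, so the schema only speaks about the
`φ`-worlds below a world `w'`. Instantiated with `¬ξ` and read contrapositively, it says: if `w'`
is a `¬φ`-world and some `φ`-world `w ≤ w'` satisfies `[★φ]ξ`, then some `φ`-world satisfying
`[★φ]ξ` lies `≤_{★φ}`-below `w'`. That is DP4 at `w'` for `ξ`; conversely, DP4 for `¬ξ` yields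
the instance of the schema for `ξ`.
-/

inductive PForm (P : Type) : Type
  | atom : P → PForm P
  | neg  : PForm P → PForm P
  | and  : PForm P → PForm P → PForm P

inductive DForm (P : Type) : Type
  | atom  : P → DForm P
  | neg   : DForm P → DForm P
  | and   : DForm P → DForm P → DForm P
  | all   : DForm P → DForm P
  | boxLe : DForm P → DForm P
  | boxLt : DForm P → DForm P
  | dyn   : PForm P → DForm P → DForm P

structure PrefModel (P : Type) where
  W : Type
  le : W → W → Prop
  refl : ∀ w, le w w
  trans : ∀ w₁ w₂ w₃, le w₁ w₂ → le w₂ w₃ → le w₁ w₃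
  wf : WellFounded (fun w w' => le w w' ∧ ¬ le w' w)
  val : P → Set W

namespace PrefModel
variable {P : Type}
def lt (M : PrefModel P) (w w' : M.W) : Prop := M.le w w' ∧ ¬ M.le w' w
def Min (M : PrefModel P) (S : Set M.W) : Set M.W :=
  {w | w ∈ S ∧ ¬ ∃ w' ∈ S, M.le w' w ∧ ¬ M.le w w'}
end PrefModel

def psat {P : Type} (M : PrefModel P) : PForm P → M.W → Prop
  | .atom p, w => w ∈ M.val p
  | .neg φ, w => ¬ psat M φ w
  | .and φ ψ, w => psat M φ w ∧ psat M ψ w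

def pext {P : Type} (M : PrefModel P) (φ : PForm P) : Set M.W := {w | psat M φ w}

structure DynOp (P : Type) where
  rel : (M : PrefModel P) → PForm P → M.W → M.W → Prop
  refl : ∀ M φ w, rel M φ w w
  trans : ∀ M φ w₁ w₂ w₃, rel M φ w₁ w₂ → rel M φ w₂ w₃ → rel M φ w₁ w₃
  wf : ∀ M φ, WellFounded (fun w w' => rel M φ w w' ∧ ¬ rel M φ w' w)

def DynOp.apply {P : Type} (s : DynOp P) (M : PrefModel P) (φ : PForm P) : PrefModel P where
  W := M.W
  le := s.rel M φ
  refl := s.refl M φ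
  trans := s.trans M φ
  wf := s.wf M φ
  val := M.val

def DynOp.srel {P : Type} (s : DynOp P) (M : PrefModel P) (φ : PForm P) (w w' : M.W) : Prop :=
  s.rel M φ w w' ∧ ¬ s.rel M φ w' w

def PForm.toD {P : Type} : PForm P → DForm P
  | .atom p => .atom p
  | .neg φ => .neg φ.toD
  | .and φ ψ => .and φ.toD ψ.toD

namespace DForm
variable {P : Type}
def imp (ξ ψ : DForm P) : DForm P := .neg (.and ξ (.neg ψ))
def iff (ξ ψ : DForm P) : DForm P := .and (imp ξ ψ) (imp ψ ξ)
def or (ξ ψ : DForm P) : DForm P := .neg (.and (.neg ξ) (.neg ψ))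
def exi (ξ : DForm P) : DForm P := .neg (.all (.neg ξ))
def diaLt (ξ : DForm P) : DForm P := .neg (.boxLt (.neg ξ))
def mu (ξ : DForm P) : DForm P := .and ξ (.neg (diaLt ξ))
def bel (ψ χ : DForm P) : DForm P := .all (imp (mu χ) ψ)
end DForm

def dsat {P : Type} (s : DynOp P) : DForm P → (M : PrefModel P) → M.W → Prop
  | .atom p, M, w => w ∈ M.val p
  | .neg ξ, M, w => ¬ dsat s ξ M w
  | .and ξ₁ ξ₂, M, w => dsat s ξ₁ M w ∧ dsat s ξ₂ M w
  | .all ξ, M, _ => ∀ w', dsat s ξ M w'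
  | .boxLe ξ, M, w => ∀ w', M.le w' w → dsat s ξ M w'
  | .boxLt ξ, M, w => ∀ w', M.lt w' w → dsat s ξ M w'
  | .dyn φ ξ, M, w => dsat s ξ (s.apply M φ) w

def ClosedOver {P : Type} (s : DynOp P) (𝔐 : Set (PrefModel P)) : Prop :=
  ∀ M ∈ 𝔐, ∀ φ : PForm P, s.apply M φ ∈ 𝔐

/-- `★` is `𝔐`-DP4-compliant. -/
def DP4Compliant {P : Type} (s : DynOp P) (𝔐 : Set (PrefModel P)) : Prop :=
  ∀ M ∈ 𝔐, ∀ (φ : PForm P) (w w' : M.W),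
    psat M φ w → ¬ psat M φ w' → M.le w w' →
      ∀ ξ : DForm P, dsat s (.dyn φ ξ) M w →
        ∃ w'' : M.W, psat M φ w'' ∧ dsat s (.dyn φ ξ) M w'' ∧ s.rel M φ w'' w'

variable {P : Type}

lemma psat_apply (s : DynOp P) (M : PrefModel P) (φ ψ : PForm P) (w : M.W) :
    psat (s.apply M φ) ψ w ↔ psat M ψ w := by
  induction ψ with
  | atom p => rfl
  | neg ψ ih => simp only [psat, ih]
  | and ψ χ ih₁ ih₂ => simp only [psat, ih₁, ih₂]

lemma dsat_toD (s : DynOp P) (φ : PForm P) (M : PrefModel P) (w : M.W) :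
    dsat s φ.toD M w ↔ psat M φ w := by
  induction φ with
  | atom p => rfl
  | neg φ ih => simp only [PForm.toD, dsat, psat, ih]
  | and φ ψ ih₁ ih₂ => simp only [PForm.toD, dsat, psat, ih₁, ih₂]

lemma dsat_imp (s : DynOp P) (ξ ψ : DForm P) (M : PrefModel P) (w : M.W) :
    dsat s (ξ.imp ψ) M w ↔ (dsat s ξ M w → dsat s ψ M w) := by
  simp only [DForm.imp, dsat, not_and, not_not]

lemma dsat_dyn_imp_toD (s : DynOp P) (φ ψ : PForm P) (ξ : DForm P) (M : PrefModel P) (w : M.W) :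
    dsat s (.dyn φ (ψ.toD.imp ξ)) M w ↔ (psat M ψ w → dsat s (.dyn φ ξ) M w) :=
  (dsat_imp s ψ.toD ξ (s.apply M φ) w).trans <|
    imp_congr_left ((dsat_toD s ψ (s.apply M φ) w).trans (psat_apply s M φ ψ w))

def dp4Schema (φ : PForm P) (ξ : DForm P) : DForm P :=
  (DForm.dyn φ (.boxLe (φ.toD.imp ξ))).imp ((DForm.neg φ.toD).imp (.boxLe (.dyn φ (φ.toD.imp ξ))))

lemma dsat_dp4Schema_iff (s : DynOp P) (φ : PForm P) (ξ : DForm P) (M : PrefModel P) (w : M.W) :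
    dsat s (dp4Schema φ ξ) M w ↔
      ((∀ u, s.rel M φ u w → psat M φ u → dsat s (.dyn φ ξ) M u) →
        ¬ psat M φ w → ∀ u, M.le u w → psat M φ u → dsat s (.dyn φ ξ) M u) := by
  rw [dp4Schema, dsat_imp, dsat_imp]
  change ((∀ u : M.W, s.rel M φ u w → dsat s (.dyn φ (φ.toD.imp ξ)) M u) →
      ¬ dsat s φ.toD M w → ∀ u : M.W, M.le u w → dsat s (.dyn φ (φ.toD.imp ξ)) M u) ↔ _
  simp only [dsat_dyn_imp_toD, dsat_toD]

theorem dp4_compliance_characterisation_general {P : Type}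
    (𝔐 : Set (PrefModel P)) (s : DynOp P) :
    (∀ (φ : PForm P) (ξ : DForm P), ∀ M ∈ 𝔐, ∀ w : M.W,
      dsat s ((DForm.dyn φ (.boxLe (φ.toD.imp ξ))).imp
        ((DForm.neg φ.toD).imp (.boxLe (.dyn φ (φ.toD.imp ξ))))) M w) ↔
      DP4Compliant s 𝔐 := by
  constructor
  · intro hvalid M hM φ w w' hw hw' hle ξ hξ
    have hschema := (dsat_dp4Schema_iff s φ (.neg ξ) M w').1 (hvalid φ (.neg ξ) M hM w')
    by_contra hnone
    push Not at hnone
    exact hschema (fun u hu hφu hξu => hnone u hφu hξu hu) hw' w hle hw hξ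
  · intro hdp4 φ ξ M hM w
    refine (dsat_dp4Schema_iff s φ ξ M w).2 fun hbefore hw u hle hu => ?_
    by_contra hξ
    obtain ⟨w'', hφw'', hnξ, hrel⟩ := hdp4 M hM φ u w hu hw hle (.neg ξ) hξ
    exact hnξ (hbefore w'' hrel hφw'')

theorem dp4_compliance_characterisation {P : Type}
    (𝔐 : Set (PrefModel P)) (s : DynOp P) (hclosed : ClosedOver s 𝔐) :
    (∀ (φ : PForm P) (ξ : DForm P), ∀ M ∈ 𝔐, ∀ w : M.W,
      dsat s ((DForm.dyn φ (.boxLe (φ.toD.imp ξ))).imp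
        ((DForm.neg φ.toD).imp (.boxLe (.dyn φ (φ.toD.imp ξ))))) M w) ↔
      DP4Compliant s 𝔐 :=
  dp4_compliance_characterisation_general 𝔐 s
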